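/- Let a < b < c < d be real numbers, write s = d+c-a-b, and let Φ be the trapezoidal uncertainty distribution with parameters a, b, c, d. Then ∫₀^∞ (1 - Φ(r)) dr − ∫_{-∞}^0 Φ(r) dr = (1/(3s))·((d³-c³)/(d-c) − (b³-a³)/(b-a)). -/

import Mathlib

/-!
Because `Φ` vanishes on `(-∞, a]` and equals `1` on `[d, ∞)`, both improper integrals reduce to
integrals over bounded intervals, and together they equal `d - ∫_a^d Φ`. On `[a, b]`, `[b, c]`
and `[c, d]` the function `Φ` is a polynomial, with integrals `(b-a)²/(3s)`, `(c-a)(c-b)/s` and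
`(d-c) - (d-c)²/(3s)`; the claimed value is `d` minus their sum, rearranged.
-/

open MeasureTheory Set

/-- The trapezoidal uncertainty distribution with parameters `a < b < c < d`. -/
noncomputable def trapPhi (a b c d : ℝ) (x : ℝ) : ℝ :=
  if x ≤ a then 0
  else if x ≤ b then (x - a) ^ 2 / ((d + c - a - b) * (b - a))
  else if x ≤ c then (2 * x - a - b) / (d + c - a - b)
  else if x ≤ d then 1 - (d - x) ^ 2 / ((d + c - a - b) * (d - c))
  else 1

theorem integral_Ioi_eq_intervalIntegral_of_eq_zero {g : ℝ → ℝ} {t M : ℝ} (htM : t ≤ M)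
    (hg : ∀ x, M < x → g x = 0) : ∫ x in Ioi t, g x = ∫ x in t..M, g x := by
  rw [intervalIntegral.integral_of_le htM]
  exact setIntegral_eq_of_subset_of_forall_sdiff_eq_zero measurableSet_Ioi Ioc_subset_Ioi_self
    fun x hx => hg x (not_le.mp fun h => hx.2 ⟨hx.1, h⟩)

theorem integral_Iio_eq_intervalIntegral_of_eq_zero {g : ℝ → ℝ} {t m : ℝ} (hmt : m ≤ t)
    (hg : ∀ x ≤ m, g x = 0) : ∫ x in Iio t, g x = ∫ x in m..t, g x := by
  rw [intervalIntegral.integral_of_le hmt, ← integral_Ico_eq_integral_Ioc]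
  exact setIntegral_eq_of_subset_of_forall_sdiff_eq_zero measurableSet_Iio Ico_subset_Iio_self
    fun x hx => hg x (not_lt.mp fun h => hx.2 ⟨h.le, hx.1⟩)

noncomputable def expectedValue (Φ : ℝ → ℝ) : ℝ :=
  (∫ r in Ioi (0 : ℝ), (1 - Φ r)) - ∫ r in Iio (0 : ℝ), Φ r

theorem expectedValue_eq_sub_intervalIntegral {Φ : ℝ → ℝ} {a d : ℝ}
    (hΦ : LocallyIntegrable Φ) (h0 : ∀ x ≤ a, Φ x = 0) (h1 : ∀ x, d ≤ x → Φ x = 1) :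
    expectedValue Φ = d - ∫ r in a..d, Φ r := by
  have hi (u v : ℝ) : IntervalIntegrable Φ volume u v :=
    (hΦ.integrableOn_isCompact isCompact_uIcc).intervalIntegrable
  set m := min a 0
  set M := max d 0
  have hm : ∫ r in m..a, Φ r = 0 := by
    rw [intervalIntegral.integral_congr (g := fun _ => 0)
      fun x hx => h0 x (hx.2.trans_eq (max_eq_right (min_le_left a 0)))]
    simp
  have hM : ∫ r in d..M, Φ r = M - d := by
    rw [intervalIntegral.integral_congr (g := fun _ => 1)
      fun x hx => h1 x ((min_eq_left (le_max_left d 0)).symm.trans_le hx.1)]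
    simp [M]
  have hsplit :
      ∫ r in m..M, Φ r = (∫ r in m..a, Φ r) + (∫ r in a..d, Φ r) + ∫ r in d..M, Φ r := by
    rw [intervalIntegral.integral_add_adjacent_intervals (hi _ _) (hi _ _),
      intervalIntegral.integral_add_adjacent_intervals (hi _ _) (hi _ _)]
  have hjoin := intervalIntegral.integral_add_adjacent_intervals (hi m 0) (hi 0 M)
  rw [expectedValue,
    integral_Ioi_eq_intervalIntegral_of_eq_zero (le_max_right d 0)
      fun x hx => by simp [h1 x (le_max_left d 0 |>.trans hx.le)],
    integral_Iio_eq_intervalIntegral_of_eq_zero (min_le_right a 0)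
      fun x hx => h0 x (hx.trans (min_le_left a 0)),
    intervalIntegral.integral_sub intervalIntegrable_const (hi 0 M)]
  simp only [intervalIntegral.integral_const, smul_eq_mul, mul_one, sub_zero]
  linarith

section Trapezoid

variable {a b c d : ℝ}

theorem trapPhi_of_le {x : ℝ} (hx : x ≤ a) : trapPhi a b c d x = 0 := by
  simp [trapPhi, hx]

theorem trapPhi_of_ge (hab : a < b) (hbc : b < c) (hcd : c < d) {x : ℝ} (hx : d ≤ x) :
    trapPhi a b c d x = 1 := by
  rcases hx.eq_or_lt with rfl | hx
  · simp [trapPhi, hab.trans (hbc.trans hcd) |>.not_ge, (hbc.trans hcd).not_ge, hcd.not_ge]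
  · simp [trapPhi, (hab.trans (hbc.trans hcd) |>.trans hx).not_ge,
      (hbc.trans hcd |>.trans hx).not_ge, (hcd.trans hx).not_ge, hx.not_ge]

theorem trapPhi_eqOn_Icc_ab :
    EqOn (trapPhi a b c d) (fun x => (x - a) ^ 2 / ((d + c - a - b) * (b - a))) (Icc a b) := by
  rintro x ⟨hax, hxb⟩
  rcases hax.eq_or_lt with rfl | hax
  · simp [trapPhi]
  · simp [trapPhi, hax.not_ge, hxb]

theorem trapPhi_eqOn_Icc_bc (hab : a < b) :
    EqOn (trapPhi a b c d) (fun x => (2 * x - a - b) / (d + c - a - b)) (Icc b c) := by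
  have hba : b - a ≠ 0 := sub_ne_zero.mpr hab.ne'
  rintro x ⟨hbx, hxc⟩
  rcases hbx.eq_or_lt with rfl | hbx
  · simp only [trapPhi, hab.not_ge, ↓reduceIte, le_refl]
    field_simp
    ring
  · simp [trapPhi, (hab.trans hbx).not_ge, hbx.not_ge, hxc]

theorem trapPhi_eqOn_Icc_cd (hab : a < b) (hbc : b < c) (hcd : c < d) :
    EqOn (trapPhi a b c d) (fun x => 1 - (d - x) ^ 2 / ((d + c - a - b) * (d - c))) (Icc c d) := by
  have hs : d + c - a - b ≠ 0 := by linarith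
  have hdc : d - c ≠ 0 := sub_ne_zero.mpr hcd.ne'
  rintro x ⟨hcx, hxd⟩
  rcases hcx.eq_or_lt with rfl | hcx
  · simp only [trapPhi, (hab.trans hbc).not_ge, hbc.not_ge, ↓reduceIte, le_refl]
    field_simp
    ring
  · simp [trapPhi, (hab.trans hbc |>.trans hcx).not_ge, (hbc.trans hcx).not_ge, hcx.not_ge, hxd]

theorem continuous_trapPhi (hab : a < b) (hbc : b < c) (hcd : c < d) :
    Continuous (trapPhi a b c d) := by
  have hs : d + c - a - b ≠ 0 := by linarith
  have hba : b - a ≠ 0 := sub_ne_zero.mpr hab.ne'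
  have hdc : d - c ≠ 0 := sub_ne_zero.mpr hcd.ne'
  refine continuous_const.if_le (Continuous.if_le (by fun_prop) (Continuous.if_le (by fun_prop)
    (Continuous.if_le (by fun_prop) continuous_const continuous_id continuous_const ?_)
    continuous_id continuous_const ?_) continuous_id continuous_const ?_)
    continuous_id continuous_const ?_
  all_goals rintro x rfl
  · simp
  · simp only [hcd.le, ↓reduceIte]
    field_simp
    ring
  · simp only [hbc.le, ↓reduceIte]
    field_simp
    ring
  · simp [hab.le]

theorem integral_trapPhi_ab (hab : a < b) :
    ∫ x in a..b, trapPhi a b c d x = (b - a) ^ 2 / (3 * (d + c - a - b)) := by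
  have hba : b - a ≠ 0 := sub_ne_zero.mpr hab.ne'
  rw [intervalIntegral.integral_congr (trapPhi_eqOn_Icc_ab.mono (uIcc_of_le hab.le).subset),
    intervalIntegral.integral_div, intervalIntegral.integral_comp_sub_right (· ^ 2), integral_pow,
    sub_self]
  field_simp
  ring

theorem integral_trapPhi_bc (hab : a < b) (hbc : b < c) :
    ∫ x in b..c, trapPhi a b c d x = (c - b) * (c - a) / (d + c - a - b) := by
  rw [intervalIntegral.integral_congr ((trapPhi_eqOn_Icc_bc hab).mono (uIcc_of_le hbc.le).subset)]
  simp only [intervalIntegral.integral_div, sub_sub]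
  rw [intervalIntegral.integral_sub (Continuous.intervalIntegrable (by fun_prop) _ _) (by simp),
    intervalIntegral.integral_const_mul, integral_id, intervalIntegral.integral_const, smul_eq_mul]
  ring

theorem integral_trapPhi_cd (hab : a < b) (hbc : b < c) (hcd : c < d) :
    ∫ x in c..d, trapPhi a b c d x = (d - c) - (d - c) ^ 2 / (3 * (d + c - a - b)) := by
  have hdc : d - c ≠ 0 := sub_ne_zero.mpr hcd.ne'
  rw [intervalIntegral.integral_congr
      ((trapPhi_eqOn_Icc_cd hab hbc hcd).mono (uIcc_of_le hcd.le).subset),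
    intervalIntegral.integral_sub (by simp) (Continuous.intervalIntegrable (by fun_prop) _ _),
    intervalIntegral.integral_div, intervalIntegral.integral_comp_sub_left (· ^ 2), integral_pow,
    sub_self,
    intervalIntegral.integral_const, smul_eq_mul, mul_one]
  field_simp
  ring

end Trapezoid

theorem trapezoidal_expected_value (a b c d : ℝ) (hab : a < b) (hbc : b < c)
    (hcd : c < d) :
    (∫ r in Set.Ioi (0 : ℝ), (1 - trapPhi a b c d r))
      - (∫ r in Set.Iio (0 : ℝ), trapPhi a b c d r)
      = (1 / (3 * (d + c - a - b)))
        * ((d ^ 3 - c ^ 3) / (d - c) - (b ^ 3 - a ^ 3) / (b - a)) := by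
  have hΦ := continuous_trapPhi hab hbc hcd
  change expectedValue (trapPhi a b c d) = _
  rw [expectedValue_eq_sub_intervalIntegral hΦ.locallyIntegrable
      (fun _ => trapPhi_of_le) (fun _ => trapPhi_of_ge hab hbc hcd),
    ← intervalIntegral.integral_add_adjacent_intervals (hΦ.intervalIntegrable a b)
      (hΦ.intervalIntegrable b d),
    ← intervalIntegral.integral_add_adjacent_intervals (hΦ.intervalIntegrable b c)
      (hΦ.intervalIntegrable c d),
    integral_trapPhi_ab hab, integral_trapPhi_bc hab hbc, integral_trapPhi_cd hab hbc hcd]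
  have hs : d + c - a - b ≠ 0 := by linarith
  have hba : b - a ≠ 0 := sub_ne_zero.mpr hab.ne'
  have hdc : d - c ≠ 0 := sub_ne_zero.mpr hcd.ne'
  field_simp
  ring
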